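/- If f(y) > 0 eventually and lim_{y→∞} y·f(y)/F̄(y) = 1/γ for some γ > 0, where F̄(y) = ∫_y^∞ f(u)du is a survival function with density f, then F̄ is regularly varying with index −1/γ, i.e., for every z > 0, lim_{y→∞} F̄(zy)/F̄(y) = z^{−1/γ}. -/

import Mathlib

/-!
In logarithmic coordinates `g t = log F̄ (exp t)` the hypothesis says `g' t → -1/γ`, so by the
mean value theorem every increment `g (t + log z) - g t` tends to `-(1/γ) log z`;
exponentiating gives `F̄ (z y) / F̄ y → z ^ (-1/γ)`.
-/

open Filter Real Topology Set

theorem tendsto_sub_comp_add_of_tendsto_deriv {g g' : ℝ → ℝ} {c : ℝ}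
    (hg : ∀ᶠ t in atTop, HasDerivAt g (g' t) t) (hg' : Tendsto g' atTop (𝓝 c)) (h : ℝ) :
    Tendsto (fun t => g (t + h) - g t) atTop (𝓝 (c * h)) := by
  refine Metric.tendsto_nhds.2 fun ε hε => ?_
  have hδ : 0 < ε / (|h| + 1) := by positivity
  obtain ⟨T, hT⟩ := eventually_atTop.1 (hg.and (Metric.tendsto_nhds.1 hg' _ hδ))
  filter_upwards [eventually_ge_atTop (T + |h|)] with t ht
  have hseg : ∀ s ∈ uIcc t (t + h), T ≤ s := fun s hs =>
    (le_min (by linarith [abs_nonneg h]) (by linarith [neg_abs_le h])).trans hs.1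
  have hmvt := (convex_uIcc t (t + h)).norm_image_sub_le_of_norm_hasDerivWithin_le
    (f := fun s => g s - c * s) (f' := fun s => g' s - c)
    (fun s hs => (((hT s (hseg s hs)).1.sub ((hasDerivAt_id s).const_mul c)).congr_deriv
      (by simp)).hasDerivWithinAt)
    (fun s hs => (hT s (hseg s hs)).2.le) left_mem_uIcc right_mem_uIcc
  rw [dist_eq]
  calc |g (t + h) - g t - c * h|
      = ‖(g (t + h) - c * (t + h)) - (g t - c * t)‖ := by rw [Real.norm_eq_abs]; congr 1; ring
    _ ≤ ε / (|h| + 1) * |h| := by simpa using hmvt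
    _ < ε := by
      rw [div_mul_eq_mul_div, div_lt_iff₀ (by positivity)]
      nlinarith [abs_nonneg h]

theorem tendsto_comp_mul_div_self_of_tendsto_mul_deriv_div {F F' : ℝ → ℝ} {L : ℝ}
    (hpos : ∀ᶠ y in atTop, 0 < F y) (hderiv : ∀ᶠ y in atTop, HasDerivAt F (F' y) y)
    (hlim : Tendsto (fun y => y * F' y / F y) atTop (𝓝 L)) {z : ℝ} (hz : 0 < z) :
    Tendsto (fun y => F (z * y) / F y) atTop (𝓝 (z ^ L)) := by
  have hlog_deriv : ∀ᶠ t in atTop,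
      HasDerivAt (fun t => log (F (exp t))) (exp t * F' (exp t) / F (exp t)) t := by
    filter_upwards [tendsto_exp_atTop.eventually (hpos.and hderiv)] with t ⟨hFpos, hF'⟩
    exact ((hF'.comp t (hasDerivAt_exp t)).log hFpos.ne').congr_deriv
      (by rw [Function.comp_apply, mul_comm])
  have hincr := (tendsto_sub_comp_add_of_tendsto_deriv hlog_deriv (hlim.comp tendsto_exp_atTop)
    (log z)).comp tendsto_log_atTop
  rw [rpow_def_of_pos hz, mul_comm]
  have hFz : ∀ᶠ y in atTop, 0 < F (z * y) := (tendsto_id.const_mul_atTop hz).eventually hpos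
  refine ((continuous_exp.tendsto _).comp hincr).congr' ?_
  filter_upwards [eventually_gt_atTop 0, hpos, hFz] with y hy hFy hFzy
  simp only [Function.comp_apply]
  rw [exp_sub, exp_add, exp_log hy, exp_log hz, mul_comm y z,
    exp_log hFy, exp_log hFzy]

theorem survival_regularly_varying_general
    (Fbar f : ℝ → ℝ) (γ : ℝ)
    (hpos : ∀ y, 0 < y → 0 < Fbar y)
    (hderiv : ∀ y, 0 < y → HasDerivAt Fbar (-(f y)) y)
    (hratio : Tendsto (fun y => y * f y / Fbar y) atTop (nhds (1 / γ))) :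
    ∀ z : ℝ, 0 < z →
      Tendsto (fun y => Fbar (z * y) / Fbar y) atTop (nhds (z ^ (-(1 / γ)))) := by
  intro z hz
  refine tendsto_comp_mul_div_self_of_tendsto_mul_deriv_div
    ((eventually_gt_atTop 0).mono hpos) ((eventually_gt_atTop 0).mono hderiv) ?_ hz
  simpa only [mul_neg, neg_div] using hratio.neg

/-- If the survival function `F̄` (with density `f = -F̄'`) satisfies
`y·f(y)/F̄(y) → 1/γ` as `y → ∞`, with `f` eventually positive, then `F̄` is
regularly varying with index `-1/γ`. -/
theorem survival_regularly_varying
    (Fbar f : ℝ → ℝ) (γ : ℝ) (hγ : 0 < γ)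
    (hpos : ∀ y, 0 < y → 0 < Fbar y)
    (hle : ∀ y, 0 < y → Fbar y ≤ 1)
    (hderiv : ∀ y, 0 < y → HasDerivAt Fbar (-(f y)) y)
    (hdec : ∀ y z, 0 < y → y ≤ z → Fbar z ≤ Fbar y)
    (hlim0 : Tendsto Fbar atTop (nhds 0))
    (hfpos : ∀ᶠ y in atTop, 0 < f y)
    (hratio : Tendsto (fun y => y * f y / Fbar y) atTop (nhds (1 / γ))) :
    ∀ z : ℝ, 0 < z →
      Tendsto (fun y => Fbar (z * y) / Fbar y) atTop (nhds (z ^ (-(1 / γ)))) :=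
  survival_regularly_varying_general Fbar f γ hpos hderiv hratio
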